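/- Let G act on a simplicial complex K by exchangeable vertices, let H be the group of all exchange automorphisms of K/G (generated by all transpositions of exchangeable vertices of K/G), and let t be a transposition in Sym(Vert(K)) that acts as an exchange automorphism of K exchanging vertices u and w. Then the induced transposition t̄ on Vert(K/G) exchanging the orbits G·u and G·w (and fixing all other orbits) defines an exchange automorphism of K/G; moreover t̄ is the identity if and only if t ∈ G. -/

import Mathlib

variable {V : Type*}

def IsComplex (F : Set (Finset V)) : Prop :=
  (∀ s ∈ F, s.Nonempty) ∧ ∀ s ∈ F, ∀ t ⊆ s, t.Nonempty → t ∈ F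

def IsAuto [DecidableEq V] (F : Set (Finset V)) (φ : Equiv.Perm V) : Prop :=
  ∀ s : Finset V, s ∈ F ↔ s.image φ ∈ F

def IsExchange [DecidableEq V] (F : Set (Finset V)) (u v : V) (φ : Equiv.Perm V) : Prop :=
  IsAuto F φ ∧ φ u = v ∧ φ v = u ∧ ∀ w : V, w ≠ u → w ≠ v → φ w = w

def Exchangeable [DecidableEq V] (F : Set (Finset V)) (u v : V) : Prop :=
  ∃ φ : Equiv.Perm V, IsExchange F u v φ

def vertices (F : Set (Finset V)) : Set V := {v | ({v} : Finset V) ∈ F}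

def quotFaces (F : Set (Finset V)) (G : Subgroup (Equiv.Perm V)) : Set (Finset (Set V)) :=
  {S | ∃ s ∈ F, (↑S : Set (Set V)) = (fun v => MulAction.orbit (↥G) v) '' ↑s}

def ActsByExch [DecidableEq V] (F : Set (Finset V)) (G : Subgroup (Equiv.Perm V)) : Prop :=
  ∃ M : Set (Equiv.Perm V), G = Subgroup.closure M ∧
    ∀ φ ∈ M, ∃ u v : V, u ≠ v ∧ IsExchange F u v φ

def fullSubFaces (F : Set (Finset V)) (W : Set V) : Set (Finset V) :=
  {s ∈ F | ↑s ⊆ W}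

/-!
A group generated by transpositions contains `(x y)` exactly when `x` and `y` lie in one
orbit; this is the second claim. Consequently, for `a ∈ G • u` and `b ∈ G • w` the transposition
`(a b)` lies in the group generated by `(a u)`, `(u w)` and `(w b)`, hence is an automorphism
of `F`. A face of `F/G` containing `G • u` but not `G • w` is the image of a face of `F` meeting
`G • u` in a single vertex `v`, and applying `(v w)` to that face gives a representative of the
face with `G • u` replaced by `G • w`.
-/

open Equiv MulAction

theorem Finset.image_insert_filter_ne {α β : Type*} [DecidableEq α] [DecidableEq β]
    (f : α → β) {s : Finset α} {a : α} (ha : a ∈ s) :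
    (insert a (s.filter (f · ≠ f a))).image f = s.image f := by
  ext y
  simp only [Finset.image_insert, Finset.mem_insert, Finset.mem_image, Finset.mem_filter]
  grind

theorem Finset.image_swap_of_mem_iff_mem {α : Type*} [DecidableEq α] {S : Finset α} {a b : α}
    (h : a ∈ S ↔ b ∈ S) : S.image (swap a b) = S := by
  ext x
  rw [Finset.mem_image]
  constructor
  · rintro ⟨y, hy, rfl⟩
    rcases eq_or_ne y a with rfl | hya
    · simpa using h.1 hy
    rcases eq_or_ne y b with rfl | hyb
    · simpa using h.2 hy
    rwa [swap_apply_of_ne_of_ne hya hyb]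
  · intro hx
    refine ⟨swap a b x, ?_, swap_apply_self a b x⟩
    rcases eq_or_ne x a with rfl | hxa
    · simpa using h.1 hx
    rcases eq_or_ne x b with rfl | hxb
    · simpa using h.2 hx
    rwa [swap_apply_of_ne_of_ne hxa hxb]

section Automorphisms

variable [DecidableEq V]

def autGroup (F : Set (Finset V)) : Subgroup (Perm V) where
  carrier := {φ | IsAuto F φ}
  one_mem' s := by simp
  mul_mem' {φ ψ} hφ hψ s := by
    rw [hψ, hφ, Finset.image_image, Perm.coe_mul]
  inv_mem' {φ} hφ s := by
    rw [hφ (s.image _), Finset.image_image, Perm.coe_inv, self_comp_symm, Finset.image_id]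

theorem isAuto_of_involutive {F : Set (Finset V)} {φ : Perm V} (hφ : Function.Involutive φ)
    (h : ∀ s ∈ F, s.image φ ∈ F) : IsAuto F φ := by
  refine fun s ↦ ⟨h s, fun hs ↦ ?_⟩
  simpa [Finset.image_image, hφ.comp_self] using h _ hs

theorem IsExchange.eq_swap {F : Set (Finset V)} {a b : V} {φ : Perm V}
    (h : IsExchange F a b φ) : φ = swap a b := by
  obtain ⟨-, ha, hb, hfix⟩ := h
  ext x
  rcases eq_or_ne x a with rfl | hxa
  · simp [ha]
  rcases eq_or_ne x b with rfl | hxb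
  · simp [hb]
  · rw [hfix x hxa hxb, swap_apply_of_ne_of_ne hxa hxb]

end Automorphisms

namespace ActsByExch

variable [DecidableEq V] {F : Set (Finset V)} {G : Subgroup (Perm V)}

theorem exists_closure_isSwap (hG : ActsByExch F G) :
    ∃ M : Set (Perm V), G = Subgroup.closure M ∧ ∀ φ ∈ M, φ.IsSwap ∧ φ ∈ autGroup F := by
  obtain ⟨M, rfl, hM⟩ := hG
  refine ⟨M, rfl, fun φ hφ ↦ ?_⟩
  obtain ⟨a, b, hab, hex⟩ := hM φ hφ
  exact ⟨⟨a, b, hab, hex.eq_swap⟩, hex.1⟩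

theorem le_autGroup (hG : ActsByExch F G) : G ≤ autGroup F := by
  obtain ⟨M, rfl, hM⟩ := hG.exists_closure_isSwap
  exact (Subgroup.closure_le _).2 fun φ hφ ↦ (hM φ hφ).2

theorem swap_mem_iff (hG : ActsByExch F G) {x y : V} : swap x y ∈ G ↔ x ∈ orbit G y := by
  obtain ⟨M, rfl, hM⟩ := hG.exists_closure_isSwap
  exact swap_mem_closure_isSwap fun φ hφ ↦ (hM φ hφ).1

theorem swap_mem_autGroup (hG : ActsByExch F G) {u w a b : V}
    (ht : swap u w ∈ autGroup F) (ha : a ∈ orbit G u) (hb : b ∈ orbit G w) :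
    swap a b ∈ autGroup F := by
  have hau : swap a u ∈ autGroup F := hG.le_autGroup (hG.swap_mem_iff.2 ha)
  have hwb : swap w b ∈ autGroup F := by
    rw [swap_comm]; exact hG.le_autGroup (hG.swap_mem_iff.2 hb)
  exact SubmonoidClass.swap_mem_trans _ (SubmonoidClass.swap_mem_trans _ hau ht) hwb

end ActsByExch

section Quotient

variable [DecidableEq (Set V)] {F : Set (Finset V)} {G : Subgroup (Perm V)}

theorem mem_quotFaces_iff {S : Finset (Set V)} :
    S ∈ quotFaces F G ↔ ∃ s ∈ F, s.image (orbit G ·) = S := by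
  simp only [quotFaces, Set.mem_ofPred_eq, ← Finset.coe_image, Finset.coe_inj, eq_comm]

variable [DecidableEq V]

theorem image_image_mem_quotFaces {s : Finset V} (hs : s ∈ F) {τ : Perm V}
    (hτ : τ ∈ autGroup F) {σ : Set V → Set V}
    (hστ : ∀ x ∈ s, σ (orbit G x) = orbit G (τ x)) :
    (s.image (orbit G ·)).image σ ∈ quotFaces F G := by
  refine mem_quotFaces_iff.2 ⟨s.image τ, (hτ s).1 hs, ?_⟩
  rw [Finset.image_image, Finset.image_image]
  exact Finset.image_congr fun x hx ↦ (hστ x hx).symm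

theorem image_swap_orbit_mem_quotFaces (hF : IsComplex F) (hG : ActsByExch F G) {u w : V}
    (ht : swap u w ∈ autGroup F) {S : Finset (Set V)} (hS : S ∈ quotFaces F G)
    (hu : orbit G u ∈ S) (hw : orbit G w ∉ S) :
    S.image (swap (orbit G u) (orbit G w)) ∈ quotFaces F G := by
  obtain ⟨s, hs, rfl⟩ := mem_quotFaces_iff.1 hS
  obtain ⟨v, hvs, hvu⟩ := Finset.mem_image.1 hu
  set t := insert v (s.filter (orbit G · ≠ orbit G v))
  have hts : t ⊆ s := Finset.insert_subset hvs (Finset.filter_subset _ _)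
  rw [← Finset.image_insert_filter_ne _ hvs]
  refine image_image_mem_quotFaces (hF.2 s hs t hts (Finset.insert_nonempty _ _))
    (hG.swap_mem_autGroup ht (orbit_eq_iff.1 hvu) (mem_orbit_self w)) fun x hx ↦ ?_
  rcases Finset.mem_insert.1 hx with rfl | hx
  · rw [hvu, swap_apply_left, swap_apply_left]
  · obtain ⟨hxs, hxv⟩ := Finset.mem_filter.1 hx
    have hxw : orbit G x ≠ orbit G w := fun h ↦ hw (h ▸ Finset.mem_image_of_mem _ hxs)
    rw [swap_apply_of_ne_of_ne (hvu ▸ hxv) hxw, swap_apply_of_ne_of_ne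
      (ne_of_apply_ne (orbit G ·) hxv) (ne_of_apply_ne (orbit G ·) hxw)]

theorem isAuto_quotFaces_swap (hF : IsComplex F) (hG : ActsByExch F G) {u w : V}
    (ht : swap u w ∈ autGroup F) :
    IsAuto (quotFaces F G) (swap (orbit G u) (orbit G w)) := by
  refine isAuto_of_involutive (swap_apply_self _ _) fun S hS ↦ ?_
  by_cases hu : orbit G u ∈ S <;> by_cases hw : orbit G w ∈ S
  · rwa [Finset.image_swap_of_mem_iff_mem (iff_of_true hu hw)]
  · exact image_swap_orbit_mem_quotFaces hF hG ht hS hu hw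
  · rw [swap_comm]
    exact image_swap_orbit_mem_quotFaces hF hG (by rwa [swap_comm]) hS hw hu
  · rwa [Finset.image_swap_of_mem_iff_mem (iff_of_false hu hw)]

end Quotient

theorem induced_transposition_exchange_general [DecidableEq V] [DecidableEq (Set V)]
    (F : Set (Finset V)) (hF : IsComplex F)
    (G : Subgroup (Equiv.Perm V)) (hG : ActsByExch F G)
    (u w : V)
    (ht : IsExchange F u w (Equiv.swap u w)) :
    IsExchange (quotFaces F G) (MulAction.orbit (↥G) u) (MulAction.orbit (↥G) w)
      (Equiv.swap (MulAction.orbit (↥G) u) (MulAction.orbit (↥G) w)) ∧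
    (Equiv.swap (MulAction.orbit (↥G) u) (MulAction.orbit (↥G) w) = 1 ↔
      Equiv.swap u w ∈ G) := by
  refine ⟨⟨isAuto_quotFaces_swap hF hG ht.1, swap_apply_left _ _, swap_apply_right _ _,
    fun _ ↦ swap_apply_of_ne_of_ne⟩, ?_⟩
  rw [swap_eq_one_iff, hG.swap_mem_iff, orbit_eq_iff]

/-- Let `G` act on `F` by exchangeable vertices, and let the transposition `(u w)` act
as an exchange automorphism of `F`. Then the induced transposition on the vertices of
`F/G`, exchanging the orbits `G·u` and `G·w` and fixing all other orbits, is an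
exchange automorphism of `F/G`; and it is the identity iff `(u w) ∈ G`. -/
theorem induced_transposition_exchange [DecidableEq V] [DecidableEq (Set V)]
    (F : Set (Finset V)) (hF : IsComplex F)
    (G : Subgroup (Equiv.Perm V)) (hG : ActsByExch F G)
    (u w : V) (hu : u ∈ vertices F) (hw : w ∈ vertices F) (hne : u ≠ w)
    (ht : IsExchange F u w (Equiv.swap u w)) :
    IsExchange (quotFaces F G) (MulAction.orbit (↥G) u) (MulAction.orbit (↥G) w)
      (Equiv.swap (MulAction.orbit (↥G) u) (MulAction.orbit (↥G) w)) ∧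
    (Equiv.swap (MulAction.orbit (↥G) u) (MulAction.orbit (↥G) w) = 1 ↔
      Equiv.swap u w ∈ G) :=
  induced_transposition_exchange_general F hF G hG u w ht
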